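/- arXiv:1812.06437 — 3 statements merged into one kernel-verified Lean document; each statement's English description precedes it below -/
import Mathlib

section
/- For every integer n ≥ 2 and every real u, the equation sinh²(n v) - n² sinh²(v) = n² sin²(u) - sin²(n u) has a unique solution v ≥ 0. -/
open Real

-- sinh(m t) ≥ m sinh t for t ≥ 0
lemma sinh_nat_mul_ge (m : ℕ) {t : ℝ} (ht : 0 ≤ t) :
    (m : ℝ) * Real.sinh t ≤ Real.sinh (m * t) := by
  induction m with
  | zero => simp
  | succ k ih =>
    have h1 : Real.sinh ((k + 1 : ℕ) * t) = Real.sinh ((k : ℝ) * t) * Real.cosh t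
        + Real.cosh ((k : ℝ) * t) * Real.sinh t := by
      push_cast
      rw [add_mul, one_mul, Real.sinh_add]
    have hs1 : (0:ℝ) ≤ Real.sinh ((k:ℝ) * t) := by
      rw [Real.sinh_nonneg_iff]; positivity
    have hs2 : (0:ℝ) ≤ Real.sinh t := Real.sinh_nonneg_iff.mpr ht
    have hc1 : (1:ℝ) ≤ Real.cosh t := Real.one_le_cosh t
    have hc2 : (1:ℝ) ≤ Real.cosh ((k:ℝ) * t) := Real.one_le_cosh _
    push_cast
    push_cast at ih h1
    nlinarith

lemma sinh_nat_mul_gt {n : ℕ} (hn : 2 ≤ n) {t : ℝ} (ht : 0 < t) :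
    (n : ℝ) * Real.sinh t < Real.sinh (n * t) := by
  obtain ⟨k, rfl⟩ : ∃ k, n = k + 1 := ⟨n - 1, by omega⟩
  have hk : 1 ≤ k := by omega
  have h1 : Real.sinh ((k + 1 : ℕ) * t) = Real.sinh ((k : ℝ) * t) * Real.cosh t
      + Real.cosh ((k : ℝ) * t) * Real.sinh t := by
    push_cast
    rw [add_mul, one_mul, Real.sinh_add]
  have hkt : (0:ℝ) < (k:ℝ) * t := by positivity
  have hs1 : (k:ℝ) * Real.sinh t ≤ Real.sinh ((k:ℝ) * t) := by
    have := sinh_nat_mul_ge k ht.le; exact_mod_cast this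
  have hs2 : (0:ℝ) < Real.sinh t := Real.sinh_pos_iff.mpr ht
  have hc1 : (1:ℝ) ≤ Real.cosh t := Real.one_le_cosh t
  have hc2 : (1:ℝ) < Real.cosh ((k:ℝ) * t) := Real.one_lt_cosh.mpr hkt.ne'
  have hkpos : (1:ℝ) ≤ (k:ℝ) := by exact_mod_cast hk
  have h3 : 0 < Real.sinh ((k:ℝ) * t) := Real.sinh_pos_iff.mpr hkt
  have h4 : Real.sinh ((k:ℝ) * t) ≤ Real.sinh ((k:ℝ) * t) * Real.cosh t := by nlinarith
  have h5 : Real.sinh t < Real.cosh ((k:ℝ) * t) * Real.sinh t := by nlinarith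
  push_cast
  push_cast at h1
  nlinarith

-- sinh X ^ 2 - sinh Y ^ 2 = sinh (X+Y) * sinh (X-Y)
lemma sinh_sq_sub (X Y : ℝ) :
    Real.sinh X ^ 2 - Real.sinh Y ^ 2 = Real.sinh (X + Y) * Real.sinh (X - Y) := by
  rw [Real.sinh_add, Real.sinh_sub]
  have h1 := Real.cosh_sq X
  have h2 := Real.cosh_sq Y
  nlinarith [Real.sinh_sq X, Real.sinh_sq Y]

-- |sin (m u)| ≤ m * |sin u|
lemma abs_sin_nat_mul (m : ℕ) (u : ℝ) : |Real.sin (m * u)| ≤ (m : ℝ) * |Real.sin u| := by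
  induction m with
  | zero => simp
  | succ k ih =>
    have h1 : Real.sin ((k + 1 : ℕ) * u) = Real.sin ((k : ℝ) * u) * Real.cos u
        + Real.cos ((k : ℝ) * u) * Real.sin u := by
      push_cast
      rw [add_mul, one_mul, Real.sin_add]
    push_cast
    push_cast at h1
    rw [h1]
    calc |Real.sin ((k:ℝ) * u) * Real.cos u + Real.cos ((k:ℝ) * u) * Real.sin u|
        ≤ |Real.sin ((k:ℝ) * u) * Real.cos u| + |Real.cos ((k:ℝ) * u) * Real.sin u| :=
          abs_add_le _ _
      _ ≤ |Real.sin ((k:ℝ) * u)| * 1 + 1 * |Real.sin u| := by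
          rw [abs_mul, abs_mul]
          gcongr
          · exact Real.abs_cos_le_one u
          · exact Real.abs_cos_le_one _
      _ ≤ (k:ℝ) * |Real.sin u| + 1 * |Real.sin u| := by
          have ih' : |Real.sin ((k:ℝ) * u)| ≤ (k:ℝ) * |Real.sin u| := by exact_mod_cast ih
          linarith
      _ = ((k:ℝ) + 1) * |Real.sin u| := by ring

theorem stmt4 (n : ℕ) (hn : 2 ≤ n) (u : ℝ) :
    ∃! v : ℝ, 0 ≤ v ∧
      Real.sinh (n * v) ^ 2 - (n : ℝ) ^ 2 * Real.sinh v ^ 2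
        = (n : ℝ) ^ 2 * Real.sin u ^ 2 - Real.sin (n * u) ^ 2 := by
  set F : ℝ → ℝ := fun v => Real.sinh (n * v) ^ 2 - (n : ℝ) ^ 2 * Real.sinh v ^ 2 with hF
  set g : ℝ := (n : ℝ) ^ 2 * Real.sin u ^ 2 - Real.sin (n * u) ^ 2 with hg
  have hn1 : (1:ℝ) ≤ (n:ℝ) := by exact_mod_cast (by omega : 1 ≤ n)
  -- g ≥ 0
  have hg0 : 0 ≤ g := by
    have h := abs_sin_nat_mul n u
    have h2 : Real.sin (n * u) ^ 2 ≤ ((n:ℝ) * |Real.sin u|) ^ 2 := by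
      rw [← sq_abs]
      exact pow_le_pow_left₀ (abs_nonneg _) h 2
    have : ((n:ℝ) * |Real.sin u|) ^ 2 = (n:ℝ) ^ 2 * Real.sin u ^ 2 := by
      rw [mul_pow, sq_abs]
    rw [hg]; nlinarith
  -- strict monotonicity of F on Ici 0
  have hmono : StrictMonoOn F (Set.Ici 0) := by
    intro s hs t ht hst
    simp only [hF]
    have h1 : Real.sinh ((n:ℝ) * t) ^ 2 - Real.sinh ((n:ℝ) * s) ^ 2
        = Real.sinh ((n:ℝ) * (t + s)) * Real.sinh ((n:ℝ) * (t - s)) := by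
      rw [sinh_sq_sub]; ring_nf
    have h2 : Real.sinh t ^ 2 - Real.sinh s ^ 2
        = Real.sinh (t + s) * Real.sinh (t - s) := sinh_sq_sub t s
    have hts : (0:ℝ) < t + s := by
      rcases lt_or_eq_of_le (Set.mem_Ici.mp hs) with h | h
      · linarith
      · simp [← h]; linarith [Set.mem_Ici.mp hs, hst]
    have htms : (0:ℝ) < t - s := by linarith
    have hA := sinh_nat_mul_gt hn hts
    have hB := sinh_nat_mul_gt hn htms
    have hA0 : 0 < Real.sinh (t + s) := Real.sinh_pos_iff.mpr hts
    have hB0 : 0 < Real.sinh (t - s) := Real.sinh_pos_iff.mpr htms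
    have key : (n:ℝ)^2 * (Real.sinh (t+s) * Real.sinh (t-s))
        < Real.sinh ((n:ℝ) * (t+s)) * Real.sinh ((n:ℝ) * (t-s)) := by
      have := mul_lt_mul' hA.le hB (by positivity) (by nlinarith)
      nlinarith
    nlinarith
  -- upper bound point b
  set b : ℝ := Real.arsinh n with hb
  have hsb : Real.sinh b = (n:ℝ) := Real.sinh_arsinh n
  have hb0 : 0 ≤ b := Real.arsinh_nonneg_iff.mpr (by positivity)
  have hFb : g ≤ F b := by
    have h2b : Real.sinh (2 * b) = 2 * Real.sinh b * Real.cosh b := by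
      rw [two_mul, Real.sinh_add]; ring
    have hcb : Real.cosh b ^ 2 = (n:ℝ)^2 + 1 := by
      rw [Real.cosh_sq, hsb]
    have hmono2 : Real.sinh (2 * b) ≤ Real.sinh ((n:ℝ) * b) := by
      rw [Real.sinh_le_sinh]
      have hn2 : (2:ℝ) ≤ (n:ℝ) := by exact_mod_cast hn
      nlinarith [mul_nonneg (by linarith : (0:ℝ) ≤ (n:ℝ) - 2) hb0]
    have hs2b : 0 ≤ Real.sinh (2 * b) := by
      rw [Real.sinh_nonneg_iff]; positivity
    have hsq : Real.sinh (2*b) ^ 2 ≤ Real.sinh ((n:ℝ)*b) ^ 2 := by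
      exact pow_le_pow_left₀ hs2b hmono2 2
    have h2bsq : Real.sinh (2*b)^2 = 4 * (n:ℝ)^2 * ((n:ℝ)^2+1) := by
      rw [h2b, hsb]; nlinarith
    have hgub : g ≤ (n:ℝ)^2 := by
      have : Real.sin u ^2 ≤ 1 := Real.sin_sq_le_one u
      have hsn : 0 ≤ Real.sin (n * u)^2 := sq_nonneg _
      rw [hg]; nlinarith
    simp only [hF]
    rw [hsb] at *
    nlinarith
  -- existence via IVT
  have hcont : ContinuousOn F (Set.Icc 0 b) := by
    apply Continuous.continuousOn
    fun_prop
  have hF0 : F 0 = 0 := by simp [hF]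
  have hivt := intermediate_value_Icc hb0 hcont
  have hgmem : g ∈ Set.Icc (F 0) (F b) := by
    rw [hF0]; exact ⟨hg0, hFb⟩
  obtain ⟨v, hv, hFv⟩ := hivt hgmem
  refine ⟨v, ⟨hv.1, hFv⟩, ?_⟩
  rintro w ⟨hw0, hw⟩
  have : F w = F v := by rw [hFv]; exact hw
  exact hmono.injOn (Set.mem_Ici.mpr hw0) (Set.mem_Ici.mpr hv.1) this
end

section
/- Let n ≥ 2 and μ ∈ ℂ with sin μ ≠ 0, sin((n-1)μ/2) ≠ 0, and set ρ = sin((n+1)μ/2)/sin((n-1)μ/2) and λ = -sin(nμ)/sin(μ). If λ = -n (i.e., sin(nμ) = n sin μ), then the additional condition ξ_n cos((n+1)μ/2) = ρ cos((n-1)μ/2) holds, where ξ_n = (n+1)/(n-1). -/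
open Complex

theorem stmt9 (n : ℕ) (hn : 2 ≤ n) (μ ρ : ℂ)
    (h1 : Complex.sin μ ≠ 0)
    (h2 : Complex.sin ((n - 1) * μ / 2) ≠ 0)
    (hρ : ρ = Complex.sin ((n + 1) * μ / 2) / Complex.sin ((n - 1) * μ / 2))
    (hlam : Complex.sin (n * μ) = n * Complex.sin μ) :
    ((n + 1) / (n - 1) : ℂ) * Complex.cos ((n + 1) * μ / 2)
      = ρ * Complex.cos ((n - 1) * μ / 2) := by
  have hne : ((n : ℂ) - 1) ≠ 0 := by
    intro h
    have hn1 : (n : ℂ) = 1 := by linear_combination h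
    have : n = 1 := by exact_mod_cast hn1
    omega
  have hsum : (n : ℂ) * μ = (n + 1) * μ / 2 + (n - 1) * μ / 2 := by ring
  have hdiff : μ = (n + 1) * μ / 2 - (n - 1) * μ / 2 := by ring
  have key : Complex.sin ((n + 1) * μ / 2) * Complex.cos ((n - 1) * μ / 2)
      + Complex.cos ((n + 1) * μ / 2) * Complex.sin ((n - 1) * μ / 2)
      = n * (Complex.sin ((n + 1) * μ / 2) * Complex.cos ((n - 1) * μ / 2)
      - Complex.cos ((n + 1) * μ / 2) * Complex.sin ((n - 1) * μ / 2)) := by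
    rw [← Complex.sin_add, ← Complex.sin_sub, ← hsum, ← hdiff, hlam]
  subst hρ
  field_simp
  linear_combination key
end

section
/- For integers n ≥ 2 and real u, v with cosh((n-1)v) > cos((n-1)u), if 0 < u < π and v > 0 and v satisfies sinh²(nv) − n² sinh²v = n² sin²u − sin²(nu), then sin u · sinh(nv) − sin(nu) · sinh v > 0 (so the imaginary part of f_n^{(1)}(u) is negative). -/
lemma sinh_mul_lt (n : ℕ) (hn : 2 ≤ n) (v : ℝ) (hv : 0 < v) :
    (n : ℝ) * Real.sinh v < Real.sinh (n * v) := by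
  induction n, hn using Nat.le_induction with
  | base =>
      have h1 : 1 < Real.cosh v := Real.one_lt_cosh.mpr (ne_of_gt hv)
      have h2 : 0 < Real.sinh v := Real.sinh_pos_iff.mpr hv
      have : ((2 : ℕ) : ℝ) * v = 2 * v := by norm_num
      rw [this, Real.sinh_two_mul]
      push_cast
      nlinarith
  | succ k hk ih =>
      have hkv : 0 < (k : ℝ) * v := by positivity
      have hsk : 0 < Real.sinh ((k : ℝ) * v) := Real.sinh_pos_iff.mpr hkv
      have hc1 : 1 ≤ Real.cosh v := Real.one_le_cosh v
      have hc2 : 1 ≤ Real.cosh ((k : ℝ) * v) := Real.one_le_cosh _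
      have h2 : 0 < Real.sinh v := Real.sinh_pos_iff.mpr hv
      have hadd : ((k + 1 : ℕ) : ℝ) * v = (k : ℝ) * v + v := by push_cast; ring
      rw [hadd, Real.sinh_add]
      push_cast
      nlinarith

theorem stmt14 (n : ℕ) (hn : 2 ≤ n) (u v : ℝ)
    (hden : Real.cos ((n - 1 : ℝ) * u) < Real.cosh ((n - 1 : ℝ) * v))
    (hu : 0 < u) (hu' : u < Real.pi) (hv : 0 < v)
    (heq : Real.sinh (n * v) ^ 2 - (n : ℝ) ^ 2 * Real.sinh v ^ 2
      = (n : ℝ) ^ 2 * Real.sin u ^ 2 - Real.sin (n * u) ^ 2) :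
    0 < Real.sin u * Real.sinh (n * v) - Real.sin (n * u) * Real.sinh v := by
  have hsinu : 0 < Real.sin u := Real.sin_pos_of_pos_of_lt_pi hu hu'
  have hsv : 0 < Real.sinh v := Real.sinh_pos_iff.mpr hv
  have hlt : (n : ℝ) * Real.sinh v < Real.sinh (n * v) := sinh_mul_lt n hn v hv
  have hn2 : (2 : ℝ) ≤ (n : ℝ) := by exact_mod_cast hn
  have hsnv : 0 < Real.sinh ((n : ℝ) * v) := lt_trans (by nlinarith) hlt
  have hc : 0 < (n : ℝ) ^ 2 * Real.sin u ^ 2 - Real.sin (n * u) ^ 2 := by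
    rw [← heq]
    nlinarith [mul_pos (sub_pos.mpr hlt) (show (0:ℝ) < Real.sinh ((n:ℝ) * v) + (n:ℝ) * Real.sinh v by positivity)]
  have hA : 0 < Real.sin u * Real.sinh (n * v) := mul_pos hsinu hsnv
  have hkey : Real.sin (n * u) ^ 2 * Real.sinh v ^ 2
      < Real.sin u ^ 2 * Real.sinh (n * v) ^ 2 := by
    nlinarith [mul_pos hc (show (0:ℝ) < Real.sinh v ^ 2 + Real.sin u ^ 2 by positivity), heq]
  rcases le_or_gt (Real.sin (n * u)) 0 with hB | hB
  · nlinarith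
  · nlinarith [mul_pos hB hsv]
end
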